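/- arXiv:2212.11195 — 2 statements merged into one kernel-verified Lean document; each statement's English description precedes it below -/
import Mathlib

section
/- Let ν > 0, D > 0, μ_a > 0, μ_t > 0, v ≥ 0 and S₀ ∈ ℝ. Set ζ = ν·(D·μ_t² − μ_a) and assume ζ + μ_t·v ≠ 0. Then the function φ(z,t) = (ν·S₀·exp(−μ_t·z)/(ζ + μ_t·v))·exp(ζ·t)·(1 − exp(−(ζ + μ_t·v)·t)) satisfies (1/ν)·∂φ/∂t − D·∂²φ/∂z² + μ_a·φ = S₀·exp(−μ_t·(z + v·t)) for all z ∈ ℝ, t ∈ ℝ, with φ(z,0) = 0. -/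
/-!
Since `exp (ζ t) (1 - exp (-(ζ + μt v) t)) = exp (ζ t) - exp (-μt v t)`, the function `φ` is
`exp (-μt z)` times a combination of two exponentials in `t`. The operator
`(1/ν) ∂ₜ - D ∂²_z + μa` multiplies `exp (-μt z) exp (λ t)` by `λ/ν - D μt² + μa`; this factor
vanishes for `λ = ζ` and equals `(ζ + μt v)/ν` for `λ = -μt v`, which cancels the denominator.
-/

open Real

theorem deriv_exp_const_mul (c : ℝ) :
    (deriv fun s => exp (c * s)) = fun s => c * exp (c * s) := by
  simpa using iteratedDeriv_exp_const_mul 1 c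

theorem deriv_deriv_exp_const_mul_mul_const (c a : ℝ) :
    (deriv (deriv fun s => exp (c * s) * a)) = fun s => c ^ 2 * exp (c * s) * a := by
  rw [deriv_mul_const_field', deriv_exp_const_mul, deriv_mul_const_field',
    deriv_const_mul_field', deriv_exp_const_mul]
  ext s
  ring

theorem deriv_exp_const_mul_sub_exp_const_mul (a b : ℝ) :
    (deriv fun s => exp (a * s) - exp (b * s)) =
      fun s => a * exp (a * s) - b * exp (b * s) := by
  ext s
  rw [deriv_fun_sub (by fun_prop) (by fun_prop), deriv_exp_const_mul, deriv_exp_const_mul]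

theorem exp_mul_mul_one_sub_exp_neg_add_mul (a b t : ℝ) :
    exp (a * t) * (1 - exp (-(a + b) * t)) = exp (a * t) - exp (-b * t) := by
  rw [mul_one_sub, ← exp_add]
  ring_nf

theorem fluence_rate_parabolic_solution_general (ν D μa μt v S₀ : ℝ)
    (hν : 0 < ν)
    (ζ : ℝ) (hζ : ζ = ν * (D * μt ^ 2 - μa)) (hden : ζ + μt * v ≠ 0)
    (φ : ℝ → ℝ → ℝ)
    (hφ : φ = fun z t => (ν * S₀ * Real.exp (-μt * z) / (ζ + μt * v)) *
      Real.exp (ζ * t) * (1 - Real.exp (-(ζ + μt * v) * t))) :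
    (∀ z t : ℝ,
      (1 / ν) * deriv (fun τ => φ z τ) t - D * deriv (deriv (fun ξ => φ ξ t)) z +
        μa * φ z t = S₀ * Real.exp (-μt * (z + v * t))) ∧
    (∀ z : ℝ, φ z 0 = 0) := by
  set c := ν * S₀ / (ζ + μt * v)
  have hsep : φ = fun z t => exp (-μt * z) * (c * (exp (ζ * t) - exp (-(μt * v) * t))) := by
    funext z t
    rw [hφ, ← exp_mul_mul_one_sub_exp_neg_add_mul]
    ring
  subst hsep
  refine ⟨fun z t => ?_, fun z => by simp⟩
  simp only [deriv_const_mul_field', deriv_exp_const_mul_sub_exp_const_mul,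
    deriv_deriv_exp_const_mul_mul_const]
  rw [show -μt * (z + v * t) = -μt * z + -(μt * v) * t by ring, exp_add]
  have hν0 : ν ≠ 0 := hν.ne'
  simp only [c]
  field_simp
  subst hζ
  ring

/-- With `ζ = ν·(D·μt² − μa)` and `ζ + μt·v ≠ 0`, the function
`φ(z,t) = (ν·S₀·exp(−μt·z)/(ζ + μt·v))·exp(ζ·t)·(1 − exp(−(ζ + μt·v)·t))`
solves `(1/ν)·∂ₜφ − D·∂_zz φ + μa·φ = S₀·exp(−μt·(z + v·t))` with `φ(z,0) = 0`. -/
theorem fluence_rate_parabolic_solution (ν D μa μt v S₀ : ℝ)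
    (hν : 0 < ν) (hD : 0 < D) (hμa : 0 < μa) (hμt : 0 < μt) (hv : 0 ≤ v)
    (ζ : ℝ) (hζ : ζ = ν * (D * μt ^ 2 - μa)) (hden : ζ + μt * v ≠ 0)
    (φ : ℝ → ℝ → ℝ)
    (hφ : φ = fun z t => (ν * S₀ * Real.exp (-μt * z) / (ζ + μt * v)) *
      Real.exp (ζ * t) * (1 - Real.exp (-(ζ + μt * v) * t))) :
    (∀ z t : ℝ,
      (1 / ν) * deriv (fun τ => φ z τ) t - D * deriv (deriv (fun ξ => φ ξ t)) z +
        μa * φ z t = S₀ * Real.exp (-μt * (z + v * t))) ∧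
    (∀ z : ℝ, φ z 0 = 0) :=
  fluence_rate_parabolic_solution_general ν D μa μt v S₀ hν ζ hζ hden φ hφ
end

section
/- Let ρ, c_p, k, c_b, ω > 0 with k·μ² ≠ c_b·ω for a given μ > 0, and let v ≥ 0. Set λ = (k·μ² − c_b·ω)/(ρ·c_p) and Δ = k·μ² − c_b·ω + ρ·c_p·μ·v, and assume Δ ≠ 0. Then T(z,t) = T_b + C·exp(−μ·z)·(exp(λ·t) − exp(−μ·v·t))/Δ satisfies the 1-D bioheat equation ρ·c_p·∂T/∂t + c_b·ω·(T − T_b) = k·∂²T/∂z² + C·exp(−μ·(z+v·t)) for all z, t, with T(z,0) = T_b. -/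
/-- With `λ = (k·μ² − cb·ω)/(ρ·c_p)` and nonzero denominator
`Δ = k·μ² − cb·ω + ρ·c_p·μ·v`, the function
`T(z,t) = T_b + C·exp(−μ·z)·(exp(λ·t) − exp(−μ·v·t))/Δ` solves the 1-D bioheat equation
`ρ·c_p·∂ₜT + cb·ω·(T − T_b) = k·∂_zz T + C·exp(−μ·(z+v·t))` with `T(z,0) = T_b`. -/
theorem bioheat_solution (ρ cp k cb ω μ v C Tb : ℝ)
    (hρ : 0 < ρ) (hcp : 0 < cp) (hk : 0 < k) (hcb : 0 < cb) (hω : 0 < ω)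
    (hμ : 0 < μ) (hv : 0 ≤ v) (hne : k * μ ^ 2 ≠ cb * ω)
    (lam : ℝ) (hlam : lam = (k * μ ^ 2 - cb * ω) / (ρ * cp))
    (Δ : ℝ) (hΔ : Δ = k * μ ^ 2 - cb * ω + ρ * cp * μ * v) (hΔne : Δ ≠ 0)
    (T : ℝ → ℝ → ℝ)
    (hT : T = fun z t => Tb + C * Real.exp (-μ * z) *
      (Real.exp (lam * t) - Real.exp (-μ * v * t)) / Δ) :
    (∀ z t : ℝ,
      ρ * cp * deriv (fun τ => T z τ) t + cb * ω * (T z t - Tb) =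
        k * deriv (deriv (fun ξ => T ξ t)) z + C * Real.exp (-μ * (z + v * t))) ∧
    (∀ z : ℝ, T z 0 = Tb) := by
  have hρcp : ρ * cp ≠ 0 := by positivity
  subst hT
  constructor
  · intro z t
    -- time derivative
    have e1 : HasDerivAt (fun τ : ℝ => Real.exp (lam * τ)) (Real.exp (lam * t) * lam) t := by
      simpa using ((hasDerivAt_id t).const_mul lam).exp
    have e2 : HasDerivAt (fun τ : ℝ => Real.exp (-μ * v * τ))
        (Real.exp (-μ * v * t) * (-μ * v)) t := by
      simpa using ((hasDerivAt_id t).const_mul (-μ * v)).exp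
    have ht : HasDerivAt (fun τ : ℝ => Tb + C * Real.exp (-μ * z) *
        (Real.exp (lam * τ) - Real.exp (-μ * v * τ)) / Δ)
        (C * Real.exp (-μ * z) *
          (Real.exp (lam * t) * lam - Real.exp (-μ * v * t) * (-μ * v)) / Δ) t :=
      (((e1.sub e2).const_mul (C * Real.exp (-μ * z))).div_const Δ).const_add Tb
    have hdt : deriv (fun τ : ℝ => Tb + C * Real.exp (-μ * z) *
        (Real.exp (lam * τ) - Real.exp (-μ * v * τ)) / Δ) t
        = C * Real.exp (-μ * z) *
          (Real.exp (lam * t) * lam - Real.exp (-μ * v * t) * (-μ * v)) / Δ := ht.deriv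
    -- first spatial derivative as a function
    set G : ℝ := Real.exp (lam * t) - Real.exp (-μ * v * t) with hG
    have hz1 : ∀ ξ : ℝ, HasDerivAt (fun ξ : ℝ => Tb + C * Real.exp (-μ * ξ) * G / Δ)
        (C * (Real.exp (-μ * ξ) * (-μ)) * G / Δ) ξ := by
      intro ξ
      have hE : HasDerivAt (fun ξ : ℝ => Real.exp (-μ * ξ)) (Real.exp (-μ * ξ) * (-μ)) ξ := by
        simpa using ((hasDerivAt_id ξ).const_mul (-μ)).exp
      exact (((hE.const_mul C).mul_const G).div_const Δ).const_add Tb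
    have hd1 : deriv (fun ξ : ℝ => Tb + C * Real.exp (-μ * ξ) * G / Δ)
        = fun ξ : ℝ => C * (Real.exp (-μ * ξ) * (-μ)) * G / Δ := by
      funext ξ; exact (hz1 ξ).deriv
    have hz2 : HasDerivAt (fun ξ : ℝ => C * (Real.exp (-μ * ξ) * (-μ)) * G / Δ)
        (C * (Real.exp (-μ * z) * (-μ) * (-μ)) * G / Δ) z := by
      have hE : HasDerivAt (fun ξ : ℝ => Real.exp (-μ * ξ)) (Real.exp (-μ * z) * (-μ)) z := by
        simpa using ((hasDerivAt_id z).const_mul (-μ)).exp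
      have := (((hE.mul_const (-μ)).const_mul C).mul_const G).div_const Δ
      convert this using 1 <;> ring
    have hdd : deriv (deriv (fun ξ : ℝ => Tb + C * Real.exp (-μ * ξ) * G / Δ)) z
        = C * (Real.exp (-μ * z) * (-μ) * (-μ)) * G / Δ := by
      rw [hd1]; exact hz2.deriv
    simp only
    rw [hdt, hdd, hG]
    rw [show -μ * (z + v * t) = -μ * z + -μ * v * t by ring, Real.exp_add]
    have hlam' : lam * (ρ * cp) = k * μ ^ 2 - cb * ω := by
      rw [hlam]; field_simp
    subst hΔ
    field_simp [show μ ^ 2 * k - cb * ω + ρ * cp * μ * v ≠ 0 by convert hΔne using 2; ring]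
    linear_combination (C * Real.exp (-(μ * z)) * Real.exp (lam * t)) * hlam'
  · intro z
    simp
end
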